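/- Every permutation σ ∈ S_n whose descent composition has the form (n−k, 1^k) for some k ≥ 1 (i.e., σ is increasing then strictly decreasing with decreasing part of length k ≥ 1) is not a linear extension of any canonically-labelled plane tree with n nodes; consequently the only permutation of shape (n) that is a linear extension of every tree is the identity. -/

import Mathlib

/-- Plane trees: a node with an ordered (possibly empty) list of subtrees. -/
inductive PlaneTree : Type
  | node : List PlaneTree → PlaneTree

namespace PlaneTree

mutual
  /-- Number of nodes of a plane tree. -/
  def sizeT : PlaneTree → ℕ
    | .node ts => 1 + sizeF ts
  /-- Number of nodes of a plane forest. -/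
  def sizeF : List PlaneTree → ℕ
    | [] => 0
    | t :: ts => sizeT t + sizeF ts
end

/-- `PosT t p` : `p` (a path of child indices) is the position of a node of the tree `t`. -/
inductive PosT : PlaneTree → List ℕ → Prop
  | root (ts : List PlaneTree) : PosT (.node ts) []
  | child {ts : List PlaneTree} {t : PlaneTree} {i : ℕ} {q : List ℕ} :
      ts[i]? = some t → PosT t q → PosT (.node ts) (i :: q)

/-- Positions of the nodes of a forest: a tree index followed by a path in that tree.
A position `q` that strictly extends `p` is a (strict) descendant of `p`; in the
forest poset (roots maximal) this means `q <_F p`. -/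
def PosF (F : List PlaneTree) : List ℕ → Prop
  | [] => False
  | i :: q => ∃ t, F[i]? = some t ∧ PosT t q

/-- Comparison of positions in postorder: `postLt p q` holds iff the node at position `p`
comes strictly before the node at position `q` in the postorder traversal, i.e. the
canonical (postorder) label of `p` is smaller than that of `q`. -/
def postLt : List ℕ → List ℕ → Prop
  | [], _ => False
  | _ :: _, [] => True
  | a :: p, b :: q => a < b ∨ (a = b ∧ postLt p q)

/-- A linear extension of the forest `F` (canonically labelled, roots maximal),
presented as the list of positions of the nodes in the order they are visited:
it lists every node exactly once, and no node appears before one of its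
(strict) descendants, i.e. an earlier position is never a strict prefix of a later one. -/
def IsLinExt (F : List PlaneTree) (L : List (List ℕ)) : Prop :=
  L.Nodup ∧ (∀ p, p ∈ L ↔ PosF F p) ∧
  L.Pairwise (fun p q => ¬(p <+: q ∧ p ≠ q))

/-!
The root of a tree is a prefix of every other position, so in a linear extension nothing can
follow it: it comes last. It is also the postorder maximum, so a linear extension never ends
with a descent, which excludes every hook shape `(n-k, 1^k)` with `k ≥ 1`. A linear extension
without descents is sorted in postorder, and the postorder traversal is the only such list.
-/

theorem postLt_trans : ∀ {p q r : List ℕ}, postLt p q → postLt q r → postLt p r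
  | [], _, _, h, _ => h.elim
  | _ :: _, [], _, _, h => h.elim
  | _ :: _, _ :: _, [], _, _ => trivial
  | _ :: _, _ :: _, _ :: _, h₁, h₂ => by
      rcases h₁ with h₁ | ⟨rfl, h₁⟩ <;> rcases h₂ with h₂ | ⟨rfl, h₂⟩
      · exact Or.inl (h₁.trans h₂)
      · exact Or.inl h₁
      · exact Or.inl h₂
      · exact Or.inr ⟨rfl, postLt_trans h₁ h₂⟩

theorem postLt_irrefl : ∀ p : List ℕ, ¬ postLt p p
  | [] => id
  | a :: p => by
      rintro (h | ⟨-, h⟩)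
      · exact lt_irrefl a h
      · exact postLt_irrefl p h

theorem postLt_asymm {p q : List ℕ} (h : postLt p q) : ¬ postLt q p :=
  fun h' => postLt_irrefl p (postLt_trans h h')

theorem postLt_total : ∀ {p q : List ℕ}, p ≠ q → postLt p q ∨ postLt q p
  | [], [], h => absurd rfl h
  | [], _ :: _, _ => Or.inr trivial
  | _ :: _, [], _ => Or.inl trivial
  | a :: p, b :: q, h => by
      rcases Nat.lt_trichotomy a b with hab | rfl | hab
      · exact Or.inl (Or.inl hab)
      · rcases postLt_total (p := p) (q := q) (by rintro rfl; exact h rfl) with h' | h'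
        · exact Or.inl (Or.inr ⟨rfl, h'⟩)
        · exact Or.inr (Or.inr ⟨rfl, h'⟩)
      · exact Or.inr (Or.inl hab)

instance : IsTrans (List ℕ) postLt := ⟨fun _ _ _ => postLt_trans⟩

instance : Std.Irrefl postLt := ⟨postLt_irrefl⟩

instance : Std.Antisymm postLt := ⟨fun _ _ h h' => absurd h' (postLt_asymm h)⟩

theorem postLt_append_left : ∀ (p : List ℕ) {r : List ℕ}, r ≠ [] → postLt (p ++ r) p
  | [], [], h => absurd rfl h
  | [], _ :: _, _ => trivial
  | _ :: p, _, h => Or.inr ⟨rfl, postLt_append_left p h⟩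

theorem postLt_of_prefix {p q : List ℕ} (h : p <+: q) (hne : p ≠ q) : postLt q p := by
  obtain ⟨r, rfl⟩ := h
  exact postLt_append_left p (by rintro rfl; simp at hne)

def IsDescent (L : List (List ℕ)) (j : ℕ) : Prop :=
  postLt (L.getD j []) (L.getD (j - 1) [])

theorem forall_not_isDescent_iff_pairwise {L : List (List ℕ)} (hL : L.Nodup) :
    (∀ j ∈ Finset.Icc 1 (L.length - 1), ¬ IsDescent L j) ↔ L.Pairwise postLt := by
  constructor
  · intro h
    rw [← List.isChain_iff_pairwise, List.isChain_iff_getElem]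
    intro i hi
    have hi' : ¬ IsDescent L (i + 1) := h (i + 1) (by simp only [Finset.mem_Icc]; omega)
    rw [IsDescent, Nat.add_sub_cancel, List.getD_eq_getElem _ _ hi,
      List.getD_eq_getElem _ _ (by omega)] at hi'
    have hne : L[i] ≠ L[i + 1] := by
      rw [Ne, hL.getElem_inj_iff]
      omega
    exact (postLt_total hne).resolve_right hi'
  · intro h j hj
    simp only [Finset.mem_Icc] at hj
    rw [IsDescent, List.getD_eq_getElem _ _ (by omega), List.getD_eq_getElem _ _ (by omega)]
    exact postLt_asymm (List.pairwise_iff_getElem.1 h _ _ _ _ (by omega))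

mutual
  def posListT : PlaneTree → List (List ℕ)
    | .node ts => posListF 0 ts ++ [[]]
  /-- Postorder traversal of a forest whose trees are numbered from `i` on. -/
  def posListF : ℕ → List PlaneTree → List (List ℕ)
    | _, [] => []
    | i, t :: ts => (posListT t).map (i :: ·) ++ posListF (i + 1) ts
end

mutual
theorem mem_posListT : ∀ {t : PlaneTree} {p : List ℕ}, p ∈ posListT t ↔ PosT t p
  | .node ts, p => by
      rw [posListT, List.mem_append, List.mem_singleton, mem_posListF]
      constructor
      · rintro (⟨j, q, ⟨t, hj, hq⟩, rfl⟩ | rfl)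
        · rw [Nat.zero_add]
          exact PosT.child hj hq
        · exact PosT.root ts
      · rintro (_ | ⟨hj, hq⟩)
        · exact Or.inr rfl
        · exact Or.inl ⟨_, _, ⟨_, hj, hq⟩, by rw [Nat.zero_add]⟩
theorem mem_posListF : ∀ {i : ℕ} {F : List PlaneTree} {p : List ℕ},
    p ∈ posListF i F ↔ ∃ j q, PosF F (j :: q) ∧ p = (i + j) :: q
  | i, [], p => by simp [posListF, PosF]
  | i, t :: ts, p => by
      rw [posListF, List.mem_append, List.mem_map, mem_posListF]
      constructor
      · rintro (⟨q, hq, rfl⟩ | ⟨j, q, ⟨u, hj, hq⟩, rfl⟩)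
        · exact ⟨0, q, ⟨t, rfl, mem_posListT.1 hq⟩, rfl⟩
        · exact ⟨j + 1, q, ⟨u, hj, hq⟩, by rw [Nat.add_right_comm, Nat.add_assoc]⟩
      · rintro ⟨_ | j, q, ⟨u, hj, hq⟩, rfl⟩
        · obtain rfl : t = u := by simpa using hj
          exact Or.inl ⟨q, mem_posListT.2 hq, rfl⟩
        · exact Or.inr ⟨j, q, ⟨u, hj, hq⟩, by rw [Nat.add_right_comm, Nat.add_assoc]⟩
end

theorem head_le_of_mem_posListF {i : ℕ} {F : List PlaneTree} {p : List ℕ}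
    (h : p ∈ posListF i F) : ∃ a q, p = a :: q ∧ i ≤ a := by
  obtain ⟨j, q, -, rfl⟩ := mem_posListF.1 h
  exact ⟨i + j, q, rfl, Nat.le_add_right i j⟩

mutual
theorem pairwise_postLt_posListT : ∀ t : PlaneTree, (posListT t).Pairwise postLt
  | .node ts => by
      refine List.pairwise_append.2 ⟨pairwise_postLt_posListF 0 ts, List.pairwise_singleton _ _, ?_⟩
      intro p hp r hr
      obtain ⟨a, q, rfl, -⟩ := head_le_of_mem_posListF hp
      rw [List.mem_singleton.1 hr]
      trivial
theorem pairwise_postLt_posListF : ∀ (i : ℕ) (F : List PlaneTree), (posListF i F).Pairwise postLt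
  | _, [] => List.Pairwise.nil
  | i, t :: ts => by
      refine List.pairwise_append.2 ⟨?_, pairwise_postLt_posListF (i + 1) ts, ?_⟩
      · exact List.pairwise_map.2 ((pairwise_postLt_posListT t).imp fun h => Or.inr ⟨rfl, h⟩)
      · intro p hp r hr
        obtain ⟨q, -, rfl⟩ := List.mem_map.1 hp
        obtain ⟨a, q', rfl, ha⟩ := head_le_of_mem_posListF hr
        exact Or.inl ha
end

mutual
theorem length_posListT : ∀ t : PlaneTree, (posListT t).length = sizeT t
  | .node ts => by
      rw [posListT, sizeT, List.length_append, length_posListF, List.length_singleton,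
        Nat.add_comm]
theorem length_posListF : ∀ (i : ℕ) (F : List PlaneTree), (posListF i F).length = sizeF F
  | _, [] => rfl
  | i, t :: ts => by
      rw [posListF, sizeF, List.length_append, List.length_map, length_posListT,
        length_posListF]
end

def postorder (F : List PlaneTree) : List (List ℕ) := posListF 0 F

theorem mem_postorder {F : List PlaneTree} {p : List ℕ} : p ∈ postorder F ↔ PosF F p := by
  rw [postorder, mem_posListF]
  constructor
  · rintro ⟨j, q, h, rfl⟩
    rwa [Nat.zero_add]
  · intro h
    match p, h with
    | j :: q, h => exact ⟨j, q, h, by rw [Nat.zero_add]⟩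

theorem pairwise_postLt_postorder (F : List PlaneTree) : (postorder F).Pairwise postLt :=
  pairwise_postLt_posListF 0 F

theorem length_postorder (F : List PlaneTree) : (postorder F).length = sizeF F :=
  length_posListF 0 F

theorem isLinExt_of_pairwise_postLt {F : List PlaneTree} {L : List (List ℕ)}
    (hs : L.Pairwise postLt) (hm : ∀ p, p ∈ L ↔ PosF F p) : IsLinExt F L :=
  ⟨hs.nodup, hm, hs.imp fun h ⟨hpre, hne⟩ => postLt_asymm h (postLt_of_prefix hpre hne)⟩

theorem isLinExt_postorder (F : List PlaneTree) : IsLinExt F (postorder F) :=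
  isLinExt_of_pairwise_postLt (pairwise_postLt_postorder F) fun _ => mem_postorder

namespace IsLinExt

variable {F : List PlaneTree} {L : List (List ℕ)}

theorem perm_postorder (hL : IsLinExt F L) : L.Perm (postorder F) :=
  (List.perm_ext_iff_of_nodup hL.1 (pairwise_postLt_postorder F).nodup).2
    fun p => (hL.2.1 p).trans mem_postorder.symm

theorem length_eq (hL : IsLinExt F L) : L.length = sizeF F := by
  rw [hL.perm_postorder.length_eq, length_postorder]

theorem eq_postorder (hL : IsLinExt F L) (hs : L.Pairwise postLt) : L = postorder F :=
  List.Perm.eq_of_pairwise' hs (pairwise_postLt_postorder F) hL.perm_postorder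

end IsLinExt

theorem eq_cons_of_posF_singleton {T : PlaneTree} {p : List ℕ} (h : PosF [T] p) :
    ∃ q, p = 0 :: q := by
  match p, h with
  | 0 :: q, _ => exact ⟨q, rfl⟩
  | (_ + 1) :: _, ⟨_, ht, _⟩ => simp at ht

theorem not_postLt_root {T : PlaneTree} {p : List ℕ} (h : PosF [T] p) : ¬ postLt [0] p := by
  obtain ⟨q, rfl⟩ := eq_cons_of_posF_singleton h
  rintro (h | ⟨-, h⟩)
  · exact lt_irrefl 0 h
  · exact h

namespace IsLinExt

variable {T : PlaneTree} {L : List (List ℕ)}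

theorem length_eq_sizeT (hL : IsLinExt [T] L) : L.length = sizeT T := by
  rw [hL.length_eq, sizeF, sizeF, Nat.add_zero]

theorem eq_append_root (hL : IsLinExt [T] L) : ∃ l, L = l ++ [[0]] := by
  obtain ⟨ts⟩ := T
  obtain ⟨l, r, rfl⟩ := List.mem_iff_append.1 ((hL.2.1 [0]).2 ⟨_, rfl, PosT.root ts⟩)
  match r, hL with
  | [], _ => exact ⟨l, rfl⟩
  | q :: r, ⟨hnd, hmem, hpw⟩ =>
      exfalso
      have hne : [0] ≠ q := fun he =>
        (List.nodup_cons.1 (List.nodup_append.1 hnd).2.1).1 (he ▸ List.mem_cons_self)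
      obtain ⟨q', rfl⟩ := eq_cons_of_posF_singleton ((hmem q).1 (by simp))
      exact (List.pairwise_cons.1 (List.pairwise_append.1 hpw).2.1).1 _ List.mem_cons_self
        ⟨⟨q', rfl⟩, hne⟩

theorem not_isDescent_last (hL : IsLinExt [T] L) (h : 2 ≤ L.length) :
    ¬ IsDescent L (L.length - 1) := by
  obtain ⟨l, rfl⟩ := hL.eq_append_root
  have hl : l.length - 1 < (l ++ [[0]]).length := by simp
  rw [IsDescent, List.length_append, List.length_singleton, Nat.add_sub_cancel,
    List.getD_append_right _ _ _ _ le_rfl, Nat.sub_self, List.getD_eq_getElem _ _ hl]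
  exact not_postLt_root ((hL.2.1 _).1 (List.getElem_mem hl))

end IsLinExt

/-- No permutation of descent composition `(n-k, 1^k)` with `k ≥ 1` (increasing then
strictly decreasing, with decreasing part of length `k ≥ 1`, i.e. descents exactly at
positions `n-k, …, n-1`) is a linear extension of a canonically-labelled plane tree with
`n` nodes; and every tree has exactly one linear extension with no descent (the identity,
the common linear extension of all trees). -/
theorem hook_shape_not_linear_extension (n k : ℕ) (hk : 1 ≤ k) (hkn : k ≤ n - 1)
    (T : PlaneTree) (hT : sizeT T = n) :
    (∀ L : List (List ℕ), IsLinExt [T] L →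
      ¬ (∀ j ∈ Finset.Icc 1 (n - 1),
          (postLt (L.getD j []) (L.getD (j - 1) []) ↔ n - k ≤ j))) ∧
    (∃! L : List (List ℕ), IsLinExt [T] L ∧
      ∀ j ∈ Finset.Icc 1 (n - 1), ¬ postLt (L.getD j []) (L.getD (j - 1) [])) := by
  refine ⟨fun L hL hdes => ?_, ⟨postorder [T], ⟨isLinExt_postorder [T], ?_⟩, ?_⟩⟩
  · have hlen := hL.length_eq_sizeT
    exact hL.not_isDescent_last (by omega)
      ((hdes (L.length - 1) (by simp only [Finset.mem_Icc]; omega)).2 (by omega))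
  · rw [← hT, ← (isLinExt_postorder [T]).length_eq_sizeT]
    exact (forall_not_isDescent_iff_pairwise (isLinExt_postorder [T]).1).2
      (pairwise_postLt_postorder [T])
  · rintro L ⟨hL, hnd⟩
    rw [← hT, ← hL.length_eq_sizeT] at hnd
    exact hL.eq_postorder ((forall_not_isDescent_iff_pairwise hL.1).1 hnd)

end PlaneTree
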